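/- The set H* := sbh(D) \ {-∞} of subharmonic functions on a domain D not identically -∞ is closed under the following operation: if (h_k) ⊂ H* is locally uniformly bounded above and below (bounded in L¹_loc order), then the upper semicontinuous regularization of limsup_k h_k belongs to H*. -/

import Mathlib

/-!
Fatou's lemma for the negative parts, and its reverse form under the integrable majorant `G` for
the positive parts, carry the sub-mean-value inequality from the `h k` to `F = limsup h k`.
The regularization `F* x = limsup_{z → x} F z` inherits it: near `x`, apply the inequality for `F`
on `closedBall z (r - dist z x) ⊆ closedBall x r`. Since `g ≤ F ≤ G` a.e., `F` is integrable on
`closedBall x r`, so these integrals converge to the integral over `closedBall x r`, which is at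
most that of `F* ≥ F`. Finally `F* ≥ F ≥ g > ⊥` somewhere, because `D` has positive measure.
-/
open MeasureTheory Filter Metric
open scoped ENNReal NNReal Topology

/-- The positive part of an extended real, as an extended nonnegative real. -/
noncomputable def EReal.posPart (x : EReal) : ℝ≥0∞ :=
  if x = ⊤ then ⊤ else ENNReal.ofReal x.toReal

/-- The integral of an `EReal`-valued function against a measure, with values in `EReal`
(defined as the integral of the positive part minus the integral of the negative part). -/
noncomputable def eInt {α : Type*} [MeasurableSpace α] (μ : Measure α) (f : α → EReal) : EReal :=
  ((∫⁻ x, (f x).posPart ∂μ : ℝ≥0∞) : EReal) - ((∫⁻ x, (-(f x)).posPart ∂μ : ℝ≥0∞) : EReal)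

/-- A function `u : X → EReal` is subharmonic on `D` if it is upper semicontinuous on `D`
and satisfies the sub-mean-value inequality on closed balls contained in `D`. -/
def SubharmonicOn {X : Type*} [NormedAddCommGroup X] [MeasureSpace X]
    (u : X → EReal) (D : Set X) : Prop :=
  UpperSemicontinuousOn u D ∧
  ∀ x ∈ D, ∀ r : ℝ, 0 < r → closedBall x r ⊆ D →
    u x * ((volume (closedBall x r)).toReal : EReal) ≤ eInt (volume.restrict (closedBall x r)) u

namespace EReal

lemma limsup_sub_le {ι : Type*} {f : Filter ι} {u v : ι → EReal}
    (h : limsup u f ≠ ⊥ ∨ liminf v f ≠ ⊥) (h' : limsup u f ≠ ⊤ ∨ liminf v f ≠ ⊤) :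
    limsup (fun i => u i - v i) f ≤ limsup u f - liminf v f := by
  have := limsup_add_le (u := u) (v := -v) (f := f)
    (by simpa only [limsup_neg, ne_eq, neg_eq_top_iff] using h)
    (by simpa only [limsup_neg, ne_eq, neg_eq_bot_iff] using h')
  rw [limsup_neg] at this
  simp only [sub_eq_add_neg]
  exact this

lemma limsup_mul_le_of_tendsto {α : Type*} {l : Filter α} {F : α → EReal} {v i : α → ℝ}
    {V I : ℝ} (hV : 0 < V) (hv : Tendsto v l (𝓝 V)) (hi : Tendsto i l (𝓝 I))
    (hle : ∀ᶠ z in l, 0 ≤ v z ∧ F z * v z ≤ i z) :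
    limsup F l * V ≤ I := by
  rw [← EReal.le_div_iff_mul_le (by exact_mod_cast hV) (coe_ne_top _), ← ge_of_forall_gt_iff_ge]
  intro t ht
  have hfreq : ∃ᶠ z in l, t * v z ≤ i z :=
    ((frequently_lt_of_lt_limsup (by isBoundedDefault) ht).and_eventually hle).mono
      fun z ⟨htz, hv0, hz⟩ => by
        have : (t : EReal) * v z ≤ i z :=
          (mul_le_mul_of_nonneg_right htz.le (by exact_mod_cast hv0)).trans hz
        exact_mod_cast this
  have htVI : t * V ≤ I := by
    by_contra! hlt
    obtain ⟨z, hz, hz'⟩ := ((hi.eventually_lt (hv.const_mul t) hlt).and_frequently hfreq).exists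
    exact hz.not_ge hz'
  rw [← coe_div]
  exact_mod_cast (le_div_iff₀ hV).2 htVI

lemma monotone_coe_ennreal : Monotone ((↑) : ℝ≥0∞ → EReal) :=
  fun _ _ => coe_ennreal_le_coe_ennreal_iff.2

lemma coe_ennreal_limsup {ι : Type*} {f : Filter ι} [f.NeBot] (a : ι → ℝ≥0∞) :
    ((limsup a f : ℝ≥0∞) : EReal) = limsup (fun i => (a i : EReal)) f :=
  monotone_coe_ennreal.map_limsup_of_continuousAt a continuous_coe_ennreal_ereal.continuousAt

lemma coe_ennreal_liminf {ι : Type*} {f : Filter ι} [f.NeBot] (a : ι → ℝ≥0∞) :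
    ((liminf a f : ℝ≥0∞) : EReal) = liminf (fun i => (a i : EReal)) f :=
  monotone_coe_ennreal.map_liminf_of_continuousAt a continuous_coe_ennreal_ereal.continuousAt

lemma monotone_toENNReal : Monotone EReal.toENNReal := fun _ _ => toENNReal_le_toENNReal

lemma toENNReal_limsup {ι : Type*} {f : Filter ι} [f.NeBot] (a : ι → EReal) :
    (limsup a f).toENNReal = limsup (fun i => (a i).toENNReal) f :=
  monotone_toENNReal.map_limsup_of_continuousAt a continuous_toENNReal.continuousAt

lemma toENNReal_neg_limsup {ι : Type*} {f : Filter ι} [f.NeBot] (a : ι → EReal) :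
    (-limsup a f).toENNReal = liminf (fun i => (-a i).toENNReal) f := by
  rw [← liminf_neg]
  exact monotone_toENNReal.map_liminf_of_continuousAt _ continuous_toENNReal.continuousAt

lemma toENNReal_le_enorm {a : EReal} {b : ℝ} (h : a ≤ b) : a.toENNReal ≤ ‖b‖ₑ :=
  (toENNReal_le_toENNReal h).trans (Real.ofReal_le_enorm b)

lemma coe_toReal_of_le_of_le {a : EReal} {b c : ℝ} (hb : (b : EReal) ≤ a) (hc : a ≤ c) :
    (a.toReal : EReal) = a :=
  coe_toReal (ne_top_of_le_ne_top (coe_ne_top c) hc) (ne_bot_of_le_ne_bot (coe_ne_bot b) hb)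

end EReal

section Measurability

variable {α β : Type*} [MeasurableSpace α] {μ : Measure α}

lemma UpperSemicontinuousOn.aemeasurable_restrict [TopologicalSpace α] [OpensMeasurableSpace α]
    [TopologicalSpace β] [MeasurableSpace β] [BorelSpace β] [LinearOrder β] [OrderTopology β]
    [SecondCountableTopology β] {u : α → β} {s : Set α} (hs : MeasurableSet s)
    (hu : UpperSemicontinuousOn u s) : AEMeasurable u (μ.restrict s) :=
  aemeasurable_restrict_of_measurable_subtype hs
    (upperSemicontinuousOn_iff_restrict.2 hu).measurable

lemma AEMeasurable.limsup [TopologicalSpace β] [MeasurableSpace β] [BorelSpace β]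
    [ConditionallyCompleteLinearOrder β] [OrderTopology β] [SecondCountableTopology β]
    {u : ℕ → α → β} (hu : ∀ k, AEMeasurable (u k) μ) :
    AEMeasurable (fun x => limsup (fun k => u k x) atTop) μ :=
  ⟨fun x => Filter.limsup (fun k => (hu k).mk _ x) atTop, .limsup fun k => (hu k).measurable_mk,
    (ae_all_iff.2 fun k => (hu k).ae_eq_mk).mono fun x hx => by simp only [hx]⟩

lemma limsup_lintegral_le' {u : ℕ → α → ℝ≥0∞} (b : α → ℝ≥0∞)
    (hu : ∀ k, AEMeasurable (u k) μ) (hb : ∀ k, u k ≤ᵐ[μ] b) (hb_fin : ∫⁻ x, b x ∂μ ≠ ∞) :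
    limsup (fun k => ∫⁻ x, u k x ∂μ) atTop ≤ ∫⁻ x, limsup (fun k => u k x) atTop ∂μ := by
  have hmk : ∀ᵐ x ∂μ, ∀ k, u k x = (hu k).mk _ x := ae_all_iff.2 fun k => (hu k).ae_eq_mk
  calc limsup (fun k => ∫⁻ x, u k x ∂μ) atTop
      = limsup (fun k => ∫⁻ x, (hu k).mk _ x ∂μ) atTop := by
        simp only [lintegral_congr_ae (hu _).ae_eq_mk]
    _ ≤ ∫⁻ x, limsup (fun k => (hu k).mk _ x) atTop ∂μ :=
        limsup_lintegral_le b (fun k => (hu k).measurable_mk)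
          (fun k => (hu k).ae_eq_mk.symm.le.trans (hb k)) hb_fin
    _ = ∫⁻ x, limsup (fun k => u k x) atTop ∂μ :=
        lintegral_congr_ae (hmk.mono fun x hx => by simp only [hx])

end Measurability

section eInt

variable {α : Type*} [MeasurableSpace α] {μ : Measure α}

/-- `EReal.posPart` is Mathlib's `EReal.toENNReal`. -/
lemma eInt_eq (u : α → EReal) :
    eInt μ u = ((∫⁻ x, (u x).toENNReal ∂μ : ℝ≥0∞) : EReal) -
      ((∫⁻ x, (-u x).toENNReal ∂μ : ℝ≥0∞) : EReal) :=
  rfl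

lemma eInt_mono {u v : α → EReal} (h : u ≤ᵐ[μ] v) : eInt μ u ≤ eInt μ v := by
  refine EReal.sub_le_sub ?_ ?_
  · exact EReal.coe_ennreal_le_coe_ennreal_iff.2 <|
      lintegral_mono_ae (h.mono fun x hx => EReal.toENNReal_le_toENNReal hx)
  · exact EReal.coe_ennreal_le_coe_ennreal_iff.2 <| lintegral_mono_ae
      (h.mono fun x hx => EReal.toENNReal_le_toENNReal (EReal.neg_le_neg_iff.2 hx))

lemma limsup_eInt_le {u : ℕ → α → EReal} {G : α → ℝ} (hu : ∀ k, AEMeasurable (u k) μ)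
    (hG : Integrable G μ) (hle : ∀ k, ∀ᵐ x ∂μ, u k x ≤ G x) :
    limsup (fun k => eInt μ (u k)) atTop ≤ eInt μ (fun x => limsup (fun k => u k x) atTop) := by
  set P := fun k => ∫⁻ x, (u k x).toENNReal ∂μ
  set N := fun k => ∫⁻ x, (-u k x).toENNReal ∂μ
  have hP_le : ∀ k, P k ≤ ∫⁻ x, ‖G x‖ₑ ∂μ := fun k =>
    lintegral_mono_ae ((hle k).mono fun x => EReal.toENNReal_le_enorm)
  have hP : limsup P atTop ≤ ∫⁻ x, (limsup (fun k => u k x) atTop).toENNReal ∂μ := by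
    simp only [EReal.toENNReal_limsup]
    exact limsup_lintegral_le' _ (fun k => measurable_ereal_toENNReal.comp_aemeasurable (hu k))
      (fun k => (hle k).mono fun x => EReal.toENNReal_le_enorm) hG.2.ne
  have hN : ∫⁻ x, (-limsup (fun k => u k x) atTop).toENNReal ∂μ ≤ liminf N atTop := by
    simp only [EReal.toENNReal_neg_limsup]
    exact lintegral_liminf_le' fun k => measurable_ereal_toENNReal.comp_aemeasurable (hu k).neg
  calc limsup (fun k => eInt μ (u k)) atTop
      ≤ limsup (fun k => (P k : EReal)) atTop - liminf (fun k => (N k : EReal)) atTop := by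
        refine EReal.limsup_sub_le (.inr ?_) (.inl ?_)
        · rw [← EReal.coe_ennreal_liminf]
          exact EReal.coe_ennreal_ne_bot _
        · rw [← EReal.coe_ennreal_limsup]
          exact EReal.coe_ennreal_eq_top_iff.not.2 <|
            ne_top_of_le_ne_top hG.2.ne (limsup_le_of_le (by isBoundedDefault) (.of_forall hP_le))
    _ ≤ eInt μ (fun x => limsup (fun k => u k x) atTop) := by
        rw [← EReal.coe_ennreal_liminf, ← EReal.coe_ennreal_limsup, eInt_eq]
        exact EReal.sub_le_sub (EReal.coe_ennreal_le_coe_ennreal_iff.2 hP)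
          (EReal.coe_ennreal_le_coe_ennreal_iff.2 hN)

lemma integrable_toReal_of_le_of_le {u : α → EReal} {g G : α → ℝ} (hu : AEMeasurable u μ)
    (hg : Integrable g μ) (hG : Integrable G μ) (hgu : ∀ᵐ x ∂μ, g x ≤ u x ∧ u x ≤ G x) :
    Integrable (fun x => (u x).toReal) μ := by
  refine integrable_of_le_of_le hu.ereal_toReal.aestronglyMeasurable ?_ ?_ hg hG <;>
    filter_upwards [hgu] with x hx <;>
    rw [← EReal.coe_le_coe_iff, EReal.coe_toReal_of_le_of_le hx.1 hx.2]
  exacts [hx.1, hx.2]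

lemma eInt_eq_integral_toReal {u : α → EReal} {g G : α → ℝ} (hu : AEMeasurable u μ)
    (hg : Integrable g μ) (hG : Integrable G μ) (hgu : ∀ᵐ x ∂μ, g x ≤ u x ∧ u x ≤ G x) :
    eInt μ u = ∫ x, (u x).toReal ∂μ := by
  have hi := integrable_toReal_of_le_of_le hu hg hG hgu
  have hfin : ∀ f : α → ℝ, Integrable f μ → ∫⁻ x, ENNReal.ofReal (f x) ∂μ ≠ ∞ := fun f hf =>
    ((lintegral_ofReal_le_lintegral_enorm f).trans_lt hf.2).ne
  rw [integral_eq_lintegral_pos_part_sub_lintegral_neg_part hi, EReal.coe_sub,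
    EReal.coe_ennreal_toReal (hfin _ hi),
    EReal.coe_ennreal_toReal (hfin (fun x => -(u x).toReal) hi.neg), eInt_eq]
  congr 2 <;> refine lintegral_congr_ae (hgu.mono fun x hx => ?_) <;> dsimp only
  · rw [EReal.toENNReal_of_ne_top (ne_top_of_le_ne_top (EReal.coe_ne_top _) hx.2)]
  · rw [EReal.toENNReal_of_ne_top, EReal.toReal_neg_eq]
    exact EReal.neg_eq_top_iff.not.2 (ne_bot_of_le_ne_bot (EReal.coe_ne_bot _) hx.1)

end eInt

lemma closedBall_sub_dist_subset {X : Type*} [PseudoMetricSpace X] (x z : X) (r : ℝ) :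
    closedBall z (r - dist z x) ⊆ closedBall x r :=
  closedBall_subset_closedBall' (by linarith)

section BallIntegrals

variable {E : Type*} [NormedAddCommGroup E] [NormedSpace ℝ E] [FiniteDimensional ℝ E]
  [MeasurableSpace E] [BorelSpace E] (μ : Measure E) [μ.IsAddHaarMeasure]

/-- The balls `closedBall z (r - dist z x)` stay inside `closedBall x r` and exhaust its
interior as `z → x`; the boundary sphere is null. -/
lemma tendsto_setIntegral_closedBall_sub_dist {f : E → ℝ} {x : E} {r : ℝ} (hr : 0 < r)
    (hf : IntegrableOn f (closedBall x r) μ) :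
    Tendsto (fun z => ∫ y in closedBall z (r - dist z x), f y ∂μ) (𝓝 x)
      (𝓝 (∫ y in closedBall x r, f y ∂μ)) := by
  simp only [← integral_indicator measurableSet_closedBall]
  refine tendsto_integral_filter_of_dominated_convergence (‖(closedBall x r).indicator f ·‖)
    (.of_forall fun z => ((hf.mono_set (closedBall_sub_dist_subset x z r)).integrable_indicator
      measurableSet_closedBall).aestronglyMeasurable)
    (.of_forall fun z => .of_forall fun y =>
      norm_indicator_le_of_subset (closedBall_sub_dist_subset x z r) f y)
    (hf.integrable_indicator measurableSet_closedBall).norm ?_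
  have hsphere : ∀ᵐ y ∂μ, y ∉ sphere x r :=
    measure_eq_zero_iff_ae_notMem.1 (Measure.addHaar_sphere_of_ne_zero μ x hr.ne')
  filter_upwards [hsphere] with y hy
  rcases lt_or_gt_of_ne (mt mem_sphere.2 hy) with hlt | hgt
  · have hdist : Tendsto (fun z => dist y z + dist z x) (𝓝 x) (𝓝 (dist y x + dist x x)) :=
      ((continuous_const.dist continuous_id).add (continuous_id.dist continuous_const)).tendsto x
    rw [dist_self, add_zero] at hdist
    refine tendsto_const_nhds.congr' ((hdist.eventually_lt_const hlt).mono fun z hz => ?_)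
    dsimp only
    rw [Set.indicator_of_mem (mem_closedBall.2 hlt.le), Set.indicator_of_mem]
    exact mem_closedBall.2 (by linarith)
  · have hy : y ∉ closedBall x r := fun h => hgt.not_ge (mem_closedBall.1 h)
    refine tendsto_const_nhds.congr fun z => ?_
    rw [Set.indicator_of_notMem hy,
      Set.indicator_of_notMem fun h => hy (closedBall_sub_dist_subset x z r h)]

end BallIntegrals

section UpperRegularization

variable {X : Type*} [TopologicalSpace X]

lemma sup_limsup_nhdsNE_eq_limsup_nhds (F : X → EReal) (x : X) :
    F x ⊔ limsup F (𝓝[≠] x) = limsup F (𝓝 x) := by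
  rw [← nhdsNE_sup_pure x, limsup_sup_filter, sup_comm]
  congr 1
  simp only [limsup_eq, eventually_pure]
  exact csInf_Ici.symm

lemma le_limsup_nhds (F : X → EReal) (x : X) : F x ≤ limsup F (𝓝 x) :=
  sup_limsup_nhdsNE_eq_limsup_nhds F x ▸ le_sup_left

lemma upperSemicontinuous_limsup_nhds (F : X → EReal) :
    UpperSemicontinuous fun x => limsup F (𝓝 x) := by
  intro x c hc
  obtain ⟨c', hc', hc'c⟩ := exists_between hc
  obtain ⟨U, hU, hUo, hxU⟩ := eventually_nhds_iff.1 (eventually_lt_of_limsup_lt hc')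
  filter_upwards [hUo.mem_nhds hxU] with y hy
  exact (limsup_le_of_le (by isBoundedDefault)
    (eventually_of_mem (hUo.mem_nhds hy) fun z hz => (hU z hz).le)).trans_lt hc'c

end UpperRegularization

section SubMeanValue

variable {X : Type*} [NormedAddCommGroup X] [MeasureSpace X]

def SubMeanValueOn (u : X → EReal) (D : Set X) : Prop :=
  ∀ x ∈ D, ∀ r : ℝ, 0 < r → closedBall x r ⊆ D →
    u x * ((volume (closedBall x r)).toReal : EReal) ≤ eInt (volume.restrict (closedBall x r)) u

lemma SubMeanValueOn.limsup [ProperSpace X] {u : ℕ → X → EReal} {D : Set X} {G : X → ℝ}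
    (hsmv : ∀ k, SubMeanValueOn (u k) D) (hu : ∀ k, AEMeasurable (u k) (volume.restrict D))
    (hG : LocallyIntegrableOn G D) (hle : ∀ k, ∀ᵐ x ∂(volume.restrict D), u k x ≤ G x) :
    SubMeanValueOn (fun x => Filter.limsup (fun k => u k x) atTop) D := by
  intro x hx r hr hB
  have hGB := hG.integrableOn_compact_subset hB (isCompact_closedBall x r)
  calc Filter.limsup (fun k => u k x) atTop * ((volume (closedBall x r)).toReal : EReal)
      = Filter.limsup (fun k => u k x * ((volume (closedBall x r)).toReal : EReal)) atTop := by
        simp only [EReal.mul_comm _ ((volume (closedBall x r)).toReal : EReal)]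
        exact (EReal.limsup_const_mul_of_nonneg_of_ne_top (by positivity)
          (EReal.coe_ne_top _)).symm
    _ ≤ Filter.limsup (fun k => eInt (volume.restrict (closedBall x r)) (u k)) atTop :=
        limsup_le_limsup (.of_forall fun k => hsmv k x hx r hr hB)
    _ ≤ _ := limsup_eInt_le (fun k => (hu k).mono_measure (Measure.restrict_mono hB le_rfl)) hGB
        fun k => ae_restrict_of_ae_restrict_of_subset hB (hle k)

end SubMeanValue

section Regularization

variable {E : Type*} [NormedAddCommGroup E] [NormedSpace ℝ E] [FiniteDimensional ℝ E]
  [MeasureSpace E] [BorelSpace E] [(volume : Measure E).IsAddHaarMeasure]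

lemma SubMeanValueOn.limsup_nhds {F : E → EReal} {D : Set E} {g G : E → ℝ}
    (hF : SubMeanValueOn F D) (hFm : AEMeasurable F (volume.restrict D))
    (hg : LocallyIntegrableOn g D) (hG : LocallyIntegrableOn G D)
    (hgFG : ∀ᵐ x ∂(volume.restrict D), g x ≤ F x ∧ F x ≤ G x) :
    SubMeanValueOn (fun x => Filter.limsup F (𝓝 x)) D := by
  intro x hx r hr hB
  have hgB := hg.integrableOn_compact_subset hB (isCompact_closedBall x r)
  have hGB := hG.integrableOn_compact_subset hB (isCompact_closedBall x r)
  have heInt : ∀ s ⊆ closedBall x r, eInt (volume.restrict s) F = ∫ y in s, (F y).toReal :=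
    fun s hs => eInt_eq_integral_toReal
      (hFm.mono_measure (Measure.restrict_mono (hs.trans hB) le_rfl)) (hgB.mono_set hs)
      (hGB.mono_set hs) (ae_restrict_of_ae_restrict_of_subset (hs.trans hB) hgFG)
  have hvol := tendsto_setIntegral_closedBall_sub_dist (volume : Measure E) (x := x) hr
    (integrableOn_const (C := (1 : ℝ)) measure_closedBall_lt_top.ne)
  simp only [setIntegral_const, smul_eq_mul, mul_one] at hvol
  have hsmv : ∀ᶠ z in 𝓝 x, 0 ≤ volume.real (closedBall z (r - dist z x)) ∧
      F z * volume.real (closedBall z (r - dist z x)) ≤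
        ∫ y in closedBall z (r - dist z x), (F y).toReal := by
    filter_upwards [ball_mem_nhds x hr] with z hz
    refine ⟨measureReal_nonneg, ?_⟩
    rw [← heInt _ (closedBall_sub_dist_subset x z r)]
    exact hF z (hB (ball_subset_closedBall hz)) _ (sub_pos.2 (mem_ball.1 hz))
      ((closedBall_sub_dist_subset x z r).trans hB)
  calc Filter.limsup F (𝓝 x) * ((volume (closedBall x r)).toReal : EReal)
      ≤ ∫ y in closedBall x r, (F y).toReal :=
        EReal.limsup_mul_le_of_tendsto
          (ENNReal.toReal_pos (measure_closedBall_pos volume x hr).ne' measure_closedBall_lt_top.ne)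
          hvol
          (tendsto_setIntegral_closedBall_sub_dist volume hr
            (integrable_toReal_of_le_of_le (hFm.mono_measure (Measure.restrict_mono hB le_rfl))
              hgB hGB (ae_restrict_of_ae_restrict_of_subset hB hgFG))) hsmv
    _ = eInt (volume.restrict (closedBall x r)) F := (heInt _ subset_rfl).symm
    _ ≤ _ := eInt_mono (.of_forall fun z => le_limsup_nhds F z)

end Regularization

theorem reg_limsup_mem_sbh_star_general {d : ℕ}
    (D : Set (EuclideanSpace ℝ (Fin d))) (hDo : IsOpen D) (hDc : IsConnected D)
    (h : ℕ → EuclideanSpace ℝ (Fin d) → EReal)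
    (hsbh : ∀ k, SubharmonicOn (h k) D)
    (hbdd : ∃ g G : EuclideanSpace ℝ (Fin d) → ℝ,
      LocallyIntegrableOn g D volume ∧ LocallyIntegrableOn G D volume ∧
      ∀ k, ∀ᵐ x ∂(volume.restrict D), (g x : EReal) ≤ h k x ∧ h k x ≤ (G x : EReal)) :
    SubharmonicOn (fun x => Filter.limsup (fun k => h k x) atTop ⊔
        Filter.limsup (fun y => Filter.limsup (fun k => h k y) atTop) (𝓝[≠] x)) D ∧
    ∃ x ∈ D, (Filter.limsup (fun k => h k x) atTop ⊔
        Filter.limsup (fun y => Filter.limsup (fun k => h k y) atTop) (𝓝[≠] x)) ≠ ⊥ := by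
  obtain ⟨g, G, hg, hG, hgG⟩ := hbdd
  set F := fun y => Filter.limsup (fun k => h k y) atTop
  show SubharmonicOn (fun x => F x ⊔ limsup F (𝓝[≠] x)) D ∧
    ∃ x ∈ D, F x ⊔ limsup F (𝓝[≠] x) ≠ ⊥
  simp only [sup_limsup_nhdsNE_eq_limsup_nhds F]
  have hmeas : ∀ k, AEMeasurable (h k) (volume.restrict D) := fun k =>
    (hsbh k).1.aemeasurable_restrict hDo.measurableSet
  have hgFG : ∀ᵐ x ∂(volume.restrict D), g x ≤ F x ∧ F x ≤ G x := by
    filter_upwards [ae_all_iff.2 hgG] with x hx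
    exact ⟨le_limsup_of_frequently_le (.of_forall fun k => (hx k).1) (by isBoundedDefault),
      limsup_le_of_le (by isBoundedDefault) (.of_forall fun k => (hx k).2)⟩
  have hF : SubMeanValueOn F D :=
    SubMeanValueOn.limsup (fun k => (hsbh k).2) hmeas hG fun k => (hgG k).mono fun _ hx => hx.2
  refine ⟨⟨(upperSemicontinuous_limsup_nhds F).upperSemicontinuousOn D,
    hF.limsup_nhds (AEMeasurable.limsup hmeas) hg hG hgFG⟩, ?_⟩
  have : (ae (volume.restrict D)).NeBot :=
    ae_restrict_neBot.2 (hDo.measure_pos volume hDc.nonempty).ne'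
  obtain ⟨x, hxD, hx⟩ := ((ae_restrict_mem hDo.measurableSet).and hgFG).exists
  exact ⟨x, hxD, ne_bot_of_le_ne_bot (EReal.coe_ne_bot _) (hx.1.trans (le_limsup_nhds F x))⟩

/-- The set `H* = sbh(D) \ {-∞}` is closed under upper-regularized `limsup`s of sequences
bounded above and below by locally integrable functions (bounded in the `L¹_loc` order):
the regularization is again subharmonic and not identically `-∞`. -/
theorem reg_limsup_mem_sbh_star {d : ℕ}
    (D : Set (EuclideanSpace ℝ (Fin d))) (hDo : IsOpen D) (hDc : IsConnected D)
    (h : ℕ → EuclideanSpace ℝ (Fin d) → EReal)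
    (hsbh : ∀ k, SubharmonicOn (h k) D)
    (hne : ∀ k, ∃ x ∈ D, h k x ≠ ⊥)
    (hbdd : ∃ g G : EuclideanSpace ℝ (Fin d) → ℝ,
      LocallyIntegrableOn g D volume ∧ LocallyIntegrableOn G D volume ∧
      ∀ k, ∀ᵐ x ∂(volume.restrict D), (g x : EReal) ≤ h k x ∧ h k x ≤ (G x : EReal)) :
    SubharmonicOn (fun x => Filter.limsup (fun k => h k x) atTop ⊔
        Filter.limsup (fun y => Filter.limsup (fun k => h k y) atTop) (𝓝[≠] x)) D ∧
    ∃ x ∈ D, (Filter.limsup (fun k => h k x) atTop ⊔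
        Filter.limsup (fun y => Filter.limsup (fun k => h k y) atTop) (𝓝[≠] x)) ≠ ⊥ :=
  reg_limsup_mem_sbh_star_general D hDo hDc h hsbh hbdd
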